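/- arXiv:math/0209076 — 2 statements merged into one kernel-verified Lean document; each statement's English description precedes it below -/
import Mathlib

section
/- Let (A_n, u_n)_{n∈ℕ} be an inverse system of groups indexed by ℕ. Define lim¹ A_n as the set of orbits of the action of ∏_n A_n on ∏_n A_n given by (a_n)·(x_n) = (a_n · x_n · u_{n+1}(a_{n+1})⁻¹). If the system satisfies the Mittag-Leffler condition (for each m, the decreasing chain of images of A_n in A_m for n ≥ m is eventually constant), then lim¹ A_n is trivial (consists of a single orbit). -/
section Lim1Defs

variable {A : ℕ → Type} [∀ n, Group (A n)]

/-- The relation on `∏ n, A n` whose orbit space is `lim¹ A n`: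
`(a_n)` acts on `(x_n)` by `(a_n * x_n * (u_{n+1} a_{n+1})⁻¹)_n`. -/
def lim1Rel (u : ∀ n, A (n + 1) →* A n) (x y : ∀ n, A n) : Prop :=
  ∃ a : ∀ n, A n, ∀ n, y n = a n * x n * (u n (a (n + 1)))⁻¹

/-- `lim¹` of an inverse system of groups indexed by `ℕ`. -/
def Lim1 (u : ∀ n, A (n + 1) →* A n) : Type :=
  Quot (lim1Rel u)

/-- The composite transition map `A (m + n) →* A m` of an inverse system. -/
def transMap (u : ∀ n, A (n + 1) →* A n) (m : ℕ) : ∀ n, A (m + n) →* A m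
  | 0 => MonoidHom.id _
  | n + 1 => (transMap u m n).comp (u (m + n))

/-- The Mittag-Leffler condition: for each `m`, the decreasing chain of images of the `A n`
in `A m` is eventually constant. -/
def MittagLeffler (u : ∀ n, A (n + 1) →* A n) : Prop :=
  ∀ m, ∃ N, ∀ n, N ≤ n → Set.range ⇑(transMap u m n) = Set.range ⇑(transMap u m N)

end Lim1Defs

/-! The class of `x` in `lim¹` is trivial as soon as the twisted equation
`c n = x n * u n (c (n + 1))` has a global solution `c` (then `c⁻¹` moves `x` to `1`).
The values at `n` of solutions on the window `[n, n + k)` form a left coset of the image of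
`A (n + k)` in `A n`, so under Mittag-Leffler they stabilise in `k`. The stable sets are nonempty
and each is mapped onto the previous one by `z ↦ x n * u n z`, so a global solution can be
chosen recursively. -/

open Set Pointwise

section DependentChoice

variable {X : ℕ → Type*} (f : ∀ n, X (n + 1) → X n) {S : ∀ n, Set (X n)}

private noncomputable def seqOfSurjOn (h0 : (S 0).Nonempty)
    (hS : ∀ n, SurjOn (f n) (S (n + 1)) (S n)) : ∀ n, S n
  | 0 => ⟨h0.some, h0.some_mem⟩
  | n + 1 =>
    ⟨(hS n (seqOfSurjOn h0 hS n).2).choose, (hS n (seqOfSurjOn h0 hS n).2).choose_spec.1⟩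

theorem exists_seq_forall_apply_succ_eq_of_surjOn (h0 : (S 0).Nonempty)
    (hS : ∀ n, SurjOn (f n) (S (n + 1)) (S n)) :
    ∃ c : ∀ n, X n, ∀ n, f n (c (n + 1)) = c n :=
  ⟨fun n => seqOfSurjOn f h0 hS n, fun n => (hS n (seqOfSurjOn f h0 hS n).2).choose_spec.2⟩

end DependentChoice

section PartialSolutions

variable {A : ℕ → Type} [∀ n, Group (A n)] (u : ∀ n, A (n + 1) →* A n)

def SolvesOn (x : ∀ n, A n) (n k : ℕ) (b : ∀ n, A n) : Prop :=
  ∀ j, n ≤ j → j < n + k → b j = x j * u j (b (j + 1))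

def solutionStarts (x : ∀ n, A n) (n k : ℕ) : Set (A n) :=
  {c | ∃ b, SolvesOn u x n k b ∧ b n = c}

variable {u}

theorem lim1Rel_one_of_forall_eq_mul {x c : ∀ n, A n} (hc : ∀ n, c n = x n * u n (c (n + 1))) :
    lim1Rel u x 1 :=
  ⟨c⁻¹, fun n => by simp [mul_assoc, ← hc n]⟩

namespace SolvesOn

variable {x : ∀ n, A n} {n k : ℕ} {b : ∀ n, A n}

theorem mono {k' : ℕ} (hb : SolvesOn u x n k' b) (hk : k ≤ k') : SolvesOn u x n k b :=
  fun j hnj hjk => hb j hnj (by omega)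

theorem mul_right {d : ∀ n, A n} (hb : SolvesOn u x n k b) (hd : SolvesOn u 1 n k d) :
    SolvesOn u x n k (b * d) := fun j hnj hjk => by
  simp [hb j hnj hjk, hd j hnj hjk, mul_assoc]

theorem inv_mul {b' : ∀ n, A n} (hb : SolvesOn u x n k b) (hb' : SolvesOn u x n k b') :
    SolvesOn u 1 n k (b⁻¹ * b') := fun j hnj hjk => by
  simp [hb j hnj hjk, hb' j hnj hjk, mul_assoc]

end SolvesOn

variable (x : ∀ n, A n)

theorem solutionStarts_zero (n : ℕ) : solutionStarts u x n 0 = univ :=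
  eq_univ_of_forall fun c => ⟨Pi.mulSingle n c, fun j _ _ => by omega, Pi.mulSingle_eq_same n c⟩

theorem solutionStarts_succ (n k : ℕ) :
    solutionStarts u x n (k + 1) = (fun z => x n * u n z) '' solutionStarts u x (n + 1) k := by
  ext c
  constructor
  · rintro ⟨b, hb, rfl⟩
    exact ⟨b (n + 1), ⟨b, fun j _ _ => hb j (by omega) (by omega), rfl⟩,
      (hb n le_rfl (by omega)).symm⟩
  · rintro ⟨z, ⟨b, hb, rfl⟩, rfl⟩
    refine ⟨Function.update b n (x n * u n (b (n + 1))), fun j hnj hjk => ?_, by simp⟩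
    obtain rfl | hnj := hnj.eq_or_lt
    · simp
    · rw [Function.update_of_ne (by omega), Function.update_of_ne (by omega)]
      exact hb j hnj (by omega)

theorem solutionStarts_nonempty (k : ℕ) : ∀ n, (solutionStarts u x n k).Nonempty := by
  induction k with
  | zero => simp [solutionStarts_zero]
  | succ k ih => exact fun n => (solutionStarts_succ x n k).symm ▸ (ih (n + 1)).image _

theorem solutionStarts_antitone (n : ℕ) : Antitone (solutionStarts u x n) :=
  fun _ _ hk _ ⟨b, hb, hbn⟩ => ⟨b, hb.mono hk, hbn⟩

theorem solutionStarts_eq_smul {n k : ℕ} {c : A n} (hc : c ∈ solutionStarts u x n k) :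
    solutionStarts u x n k = c • solutionStarts u 1 n k := by
  obtain ⟨b, hb, rfl⟩ := hc
  ext c'
  constructor
  · rintro ⟨b', hb', rfl⟩
    exact ⟨_, ⟨_, hb.inv_mul hb', rfl⟩, by simp⟩
  · rintro ⟨_, ⟨d, hd, rfl⟩, rfl⟩
    exact ⟨_, hb.mul_right hd, rfl⟩

end PartialSolutions

section TransMap

variable {A : ℕ → Type} [∀ n, Group (A n)] {u : ∀ n, A (n + 1) →* A n}

theorem transMap_apply_of_solvesOn_one {m k : ℕ} {b : ∀ n, A n} (hb : SolvesOn u 1 m k b) :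
    transMap u m k (b (m + k)) = b m := by
  induction k with
  | zero => rfl
  | succ k ih =>
    change transMap u m k (u (m + k) (b (m + k + 1))) = b m
    rw [← one_mul (u (m + k) _), ← Pi.one_apply (i := m + k),
      ← hb (m + k) (by omega) (by omega)]
    exact ih (hb.mono k.le_succ)

theorem exists_solvesOn_one (m : ℕ) :
    ∀ k (g : A (m + k)), ∃ b, SolvesOn u 1 m k b ∧ b (m + k) = g
  | 0, g => ⟨Pi.mulSingle m g, fun j _ _ => by omega, Pi.mulSingle_eq_same m g⟩
  | k + 1, g => by
    obtain ⟨b, hb, hbg⟩ := exists_solvesOn_one m k (u (m + k) g)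
    refine ⟨Function.update b (m + k + 1) g, fun j hmj hjk => ?_, Function.update_self ..⟩
    rw [Function.update_of_ne (by omega)]
    obtain rfl | hjk := (show j ≤ m + k by omega).eq_or_lt
    · simpa using hbg
    · simpa [Function.update_of_ne (by omega : j + 1 ≠ m + k + 1)] using hb j hmj hjk

variable (u)

theorem range_transMap (m k : ℕ) : range (transMap u m k) = solutionStarts u 1 m k := by
  ext c
  constructor
  · rintro ⟨g, rfl⟩
    obtain ⟨b, hb, rfl⟩ := exists_solvesOn_one m k g
    exact ⟨b, hb, (transMap_apply_of_solvesOn_one hb).symm⟩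
  · rintro ⟨b, hb, rfl⟩
    exact ⟨b (m + k), transMap_apply_of_solvesOn_one hb⟩

end TransMap

namespace MittagLeffler

variable {A : ℕ → Type} [∀ n, Group (A n)] {u : ∀ n, A (n + 1) →* A n}

theorem solutionStarts_eventually_const (hML : MittagLeffler u) (x : ∀ n, A n) (n : ℕ) :
    ∃ N, ∀ k, N ≤ k → solutionStarts u x n k = solutionStarts u x n N := by
  obtain ⟨N, hN⟩ := hML n
  refine ⟨N, fun k hk => ?_⟩
  obtain ⟨c, hc⟩ := solutionStarts_nonempty x k n
  rw [solutionStarts_eq_smul x hc, solutionStarts_eq_smul x (solutionStarts_antitone x n hk hc),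
    ← range_transMap, ← range_transMap, hN k hk]

theorem exists_forall_eq_mul (hML : MittagLeffler u) (x : ∀ n, A n) :
    ∃ c : ∀ n, A n, ∀ n, c n = x n * u n (c (n + 1)) := by
  choose N hN using hML.solutionStarts_eventually_const x
  have hsurj : ∀ n, SurjOn (fun z => x n * u n z) (solutionStarts u x (n + 1) (N (n + 1)))
      (solutionStarts u x n (N n)) := fun n => by
    rw [← hN n (max (N n) (N (n + 1)) + 1) (by omega), solutionStarts_succ,
      hN (n + 1) _ (le_max_right ..)]
    exact surjOn_image ..
  obtain ⟨c, hc⟩ := exists_seq_forall_apply_succ_eq_of_surjOn _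
    (solutionStarts_nonempty x (N 0) 0) hsurj
  exact ⟨c, fun n => (hc n).symm⟩

end MittagLeffler

/-- If an inverse system of groups indexed by `ℕ` satisfies the Mittag-Leffler condition,
then `lim¹ A_n` is trivial (a single orbit). -/
theorem statement_0 {A : ℕ → Type} [∀ n, Group (A n)] (u : ∀ n, A (n + 1) →* A n)
    (hML : MittagLeffler u) : Subsingleton (Lim1 u) := by
  have hone : ∀ p : Lim1 u, p = Quot.mk _ 1 := Quot.ind fun x => Quot.sound <| by
    obtain ⟨c, hc⟩ := hML.exists_forall_eq_mul x
    exact lim1Rel_one_of_forall_eq_mul hc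
  exact ⟨fun p q => (hone p).trans (hone q).symm⟩
end

section
/- Let (A_n, u_n)_{n∈ℕ} be an inverse system of countable groups indexed by ℕ. If the system fails the Mittag-Leffler condition, then lim¹ A_n is uncountable. -/
/-!
Fix a level `m` at which the Mittag-Leffler condition fails and let `B k ≤ A m` be the image of
`A (m + k)`. Reducing the partial products `x_m · u(x_{m+1}) ⋯ u^{k-1}(x_{m+k-1})` modulo the
`B k` gives a point of `∏ k, A m ⧸ B k`, and moving `x` inside its `lim¹` class only translates
this point by an element of `A m`. So `lim¹` maps to the orbit space of the countable group
`A m` acting on `∏ k, A m ⧸ B k`, whose orbits are countable. Along a subsequence of strict drops `B (φ (k + 1)) < B (φ k)`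
pick `g k ∈ B (φ k) \ B (φ (k + 1))`: including or omitting each `g k` in the partial products
produces `2 ^ ℵ₀` sequences `x` with pairwise different points.
-/

open MulAction Function

section CosetSequences

variable {G : Type*} [Group G]

lemma prod_range_map_eq_of_eq_one (w : ℕ → G) {a b : ℕ} (hab : a ≤ b)
    (h : ∀ j, a ≤ j → j < b → w j = 1) :
    ((List.range b).map w).prod = ((List.range a).map w).prod := by
  induction b, hab using Nat.le_induction with
  | base => rfl
  | succ b hab ih =>
    rw [List.prod_range_succ, ih fun j h₁ h₂ => h j h₁ (by omega), h b hab (by omega), mul_one]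

lemma prod_range_extend_of_strictMono {φ : ℕ → ℕ} (hφ : StrictMono φ) (hφ0 : φ 0 = 0)
    (v : ℕ → G) (k : ℕ) :
    ((List.range (φ k)).map (extend φ v 1)).prod = ((List.range k).map v).prod := by
  induction k with
  | zero => simp [hφ0]
  | succ k ih =>
    have hgap : ∀ j, φ k + 1 ≤ j → j < φ (k + 1) → extend φ v 1 j = 1 := by
      rintro j hj₁ hj₂
      refine extend_apply' _ _ _ ?_
      rintro ⟨i, rfl⟩
      have := hφ.lt_iff_lt.mp (Nat.lt_of_succ_le hj₁)
      have := hφ.lt_iff_lt.mp hj₂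
      omega
    rw [prod_range_map_eq_of_eq_one _ (hφ k.lt_succ_self) hgap, List.prod_range_succ,
      List.prod_range_succ, ih, hφ.injective.extend_apply]

def selectedProd (g : ℕ → G) (ε : ℕ → Bool) (k : ℕ) : G :=
  ((List.range k).map fun i => if ε i then g i else 1).prod

lemma selectedProd_succ (g : ℕ → G) (ε : ℕ → Bool) (k : ℕ) :
    selectedProd g ε (k + 1) = selectedProd g ε k * if ε k then g k else 1 :=
  List.prod_range_succ _ k

lemma selectedProd_congr {g : ℕ → G} {ε ε' : ℕ → Bool} {k : ℕ} (h : ∀ i < k, ε i = ε' i) :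
    selectedProd g ε k = selectedProd g ε' k := by
  unfold selectedProd
  congr 1
  exact List.map_congr_left fun i hi => by rw [h i (List.mem_range.mp hi)]

/-- Cosets of different selected products are separated at the first index where the
selections differ, since `g k ∉ C (k + 1)`. -/
lemma selectedProd_coset_injective {C : ℕ → Subgroup G} {g : ℕ → G} (hg : ∀ k, g k ∉ C (k + 1)) :
    Injective fun ε k => ((selectedProd g ε k : G) : G ⧸ C k) := by
  intro ε ε' h
  have hagree : ∀ k, ∀ i < k, ε i = ε' i := by
    intro k
    induction k with
    | zero => simp
    | succ k ih =>
      intro i hi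
      rcases Nat.lt_succ_iff_lt_or_eq.mp hi with hi | rfl
      · exact ih i hi
      have hk := QuotientGroup.eq.mp (congr_fun h (i + 1))
      rw [selectedProd_succ, selectedProd_succ, selectedProd_congr ih, mul_inv_rev, mul_assoc,
        inv_mul_cancel_left] at hk
      cases hε : ε i <;> cases hε' : ε' i <;> simp only [hε, hε'] at hk ⊢
      · exact absurd (by simpa using hk) (hg i)
      · exact absurd (by simpa using hk) (hg i)
  exact funext fun i => hagree (i + 1) i i.lt_succ_self

end CosetSequences

lemma countable_preimage_orbitRel_quotient {G X : Type*} [Group G] [MulAction G X] [Countable G]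
    {T : Set (orbitRel.Quotient G X)} (hT : T.Countable) :
    (Quotient.mk (orbitRel G X) ⁻¹' T).Countable := by
  rw [← Set.biUnion_preimage_singleton]
  refine hT.biUnion fun t _ => ?_
  induction t using Quotient.inductionOn with
  | h p =>
    refine (Set.countable_range fun a : G => a • p).mono fun q hq => ?_
    exact orbitRel_apply.mp (Quotient.exact hq)

section InverseSystem

variable {A : ℕ → Type} [∀ n, Group (A n)] (u : ∀ n, A (n + 1) →* A n)

lemma range_transMap_antitone (m : ℕ) : Antitone fun k => (transMap u m k).range :=
  antitone_nat_of_succ_le fun k => by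
    rintro _ ⟨z, rfl⟩
    exact ⟨u (m + k) z, rfl⟩

lemma exists_range_transMap_drop_of_not_mittagLeffler (hML : ¬ MittagLeffler u) :
    ∃ m, ∀ N, ∃ n, N < n ∧ ∃ g ∈ (transMap u m N).range, g ∉ (transMap u m n).range := by
  simp only [MittagLeffler, not_forall, not_exists] at hML
  obtain ⟨m, hm⟩ := hML
  refine ⟨m, fun N => ?_⟩
  obtain ⟨n, hNn, hne⟩ := hm N
  have hlt : (transMap u m n).range < (transMap u m N).range :=
    (range_transMap_antitone u m hNn).lt_of_ne fun h => hne <| by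
      simpa only [MonoidHom.coe_range] using congrArg SetLike.coe h
  exact ⟨n, hNn.lt_of_ne (by rintro rfl; exact hlt.ne rfl), SetLike.exists_of_lt hlt⟩

lemma transMap_succ_apply (m k : ℕ) (z : A (m + (k + 1))) :
    transMap u m (k + 1) z = transMap u m k (u (m + k) z) :=
  rfl

lemma exists_transMap_apply_eq {m : ℕ} (w : ℕ → A m) (hw : ∀ k, w k ∈ (transMap u m k).range) :
    ∃ x : ∀ i, A i, ∀ k, transMap u m k (x (m + k)) = w k := by
  have (i : ℕ) : ∃ z : A i, ∀ k (e : m + k = i), transMap u m k (e ▸ z) = w k := by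
    by_cases h : m ≤ i
    · obtain ⟨j, rfl⟩ := Nat.exists_eq_add_of_le h
      obtain ⟨z, hz⟩ := hw j
      refine ⟨z, fun k e => ?_⟩
      obtain rfl : k = j := by omega
      exact hz
    · exact ⟨1, fun k e => absurd e (by omega)⟩
  choose x hx using this
  exact ⟨x, fun k => hx _ k rfl⟩

def partialProd (m : ℕ) (x : ∀ i, A i) (k : ℕ) : A m :=
  ((List.range k).map fun j => transMap u m j (x (m + j))).prod

lemma partialProd_succ (m : ℕ) (x : ∀ i, A i) (k : ℕ) :
    partialProd u m x (k + 1) = partialProd u m x k * transMap u m k (x (m + k)) :=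
  List.prod_range_succ _ k

lemma partialProd_eq_prod {m : ℕ} {x : ∀ i, A i} {w : ℕ → A m}
    (hx : ∀ k, transMap u m k (x (m + k)) = w k) (k : ℕ) :
    partialProd u m x k = ((List.range k).map w).prod := by
  simp only [partialProd, hx]

lemma partialProd_of_lim1Rel {x y a : ∀ i, A i}
    (h : ∀ n, y n = a n * x n * (u n (a (n + 1)))⁻¹) (m k : ℕ) :
    partialProd u m y k = a m * partialProd u m x k * (transMap u m k (a (m + k)))⁻¹ := by
  induction k with
  | zero => simp [partialProd, transMap]
  | succ k ih =>
    rw [partialProd_succ, partialProd_succ, ih, h, map_mul, map_mul, map_inv,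
      transMap_succ_apply]
    simp only [mul_assoc, inv_mul_cancel_left]
    -- `m + k + 1` and `m + (k + 1)` agree only up to unfolding `Nat.add`
    rfl

def cosetSeq (m : ℕ) (x : ∀ i, A i) (k : ℕ) : A m ⧸ (transMap u m k).range :=
  partialProd u m x k

lemma smul_cosetSeq_of_lim1Rel {x y a : ∀ i, A i}
    (h : ∀ n, y n = a n * x n * (u n (a (n + 1)))⁻¹) (m : ℕ) :
    a m • cosetSeq u m x = cosetSeq u m y := by
  funext k
  rw [Pi.smul_apply, cosetSeq, cosetSeq, MulAction.Quotient.smul_mk, QuotientGroup.eq,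
    partialProd_of_lim1Rel u h, smul_eq_mul, inv_mul_cancel_left]
  exact inv_mem ⟨a (m + k), rfl⟩

def lim1Orbit (m : ℕ) : Lim1 u → orbitRel.Quotient (A m) (∀ k, A m ⧸ (transMap u m k).range) :=
  Quot.lift (fun x => Quotient.mk _ (cosetSeq u m x)) fun _ _ ⟨a, ha⟩ =>
    (Quotient.sound (orbitRel_apply.mpr ⟨a m, smul_cosetSeq_of_lim1Rel u ha m⟩)).symm

lemma exists_injective_cosetSeq (hML : ¬ MittagLeffler u) :
    ∃ m, ∃ x : (ℕ → Bool) → ∀ i, A i, Injective fun ε => cosetSeq u m (x ε) := by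
  obtain ⟨m, hm⟩ := exists_range_transMap_drop_of_not_mittagLeffler u hML
  choose next hnext g hg_mem hg_not_mem using hm
  set φ : ℕ → ℕ := fun k => next^[k] 0
  have hφ_succ (k : ℕ) : φ (k + 1) = next (φ k) := iterate_succ_apply' next k 0
  have hφ : StrictMono φ := strictMono_nat_of_lt_succ fun k => hφ_succ k ▸ hnext (φ k)
  set v : (ℕ → Bool) → ℕ → A m := fun ε k => if ε k then g (φ k) else 1
  have hv (ε : ℕ → Bool) (j : ℕ) : extend φ (v ε) 1 j ∈ (transMap u m j).range := by
    by_cases hj : ∃ k, φ k = j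
    · obtain ⟨k, rfl⟩ := hj
      rw [hφ.injective.extend_apply]
      by_cases hε : ε k
      · simpa [v, hε] using hg_mem (φ k)
      · simp [v, hε, one_mem]
    · rw [extend_apply' _ _ _ hj]
      exact one_mem _
  choose x hx using fun ε => exists_transMap_apply_eq u _ (hv ε)
  refine ⟨m, x, fun ε ε' h => selectedProd_coset_injective
    (C := fun k => (transMap u m (φ k)).range) (g := g ∘ φ) (fun k => ?_) (funext fun k => ?_)⟩
  · change g (φ k) ∉ (transMap u m (φ (k + 1))).range
    rw [hφ_succ]
    exact hg_not_mem (φ k)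
  · have hk := congr_fun h (φ k)
    simp only [cosetSeq, partialProd_eq_prod u (hx _), prod_range_extend_of_strictMono hφ rfl]
      at hk
    exact hk

end InverseSystem

/-- If an inverse system of countable groups indexed by `ℕ` fails the Mittag-Leffler
condition, then `lim¹ A_n` is uncountable. -/
theorem statement_1 {A : ℕ → Type} [∀ n, Group (A n)] [∀ n, Countable (A n)]
    (u : ∀ n, A (n + 1) →* A n) (hML : ¬ MittagLeffler u) : Uncountable (Lim1 u) := by
  obtain ⟨m, x, hx⟩ := exists_injective_cosetSeq u hML
  rw [← not_countable_iff]
  intro hLim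
  have hrange : (Set.range fun ε => cosetSeq u m (x ε)).Countable :=
    (countable_preimage_orbitRel_quotient (Set.countable_range (lim1Orbit u m))).mono
      (Set.range_subset_iff.mpr fun ε => Set.mem_range_self (f := lim1Orbit u m) (Quot.mk _ (x ε)))
  have : Uncountable (ℕ → Bool) :=
    Cardinal.aleph0_lt_mk_iff.mp (by simpa using Cardinal.cantor Cardinal.aleph0)
  exact Set.not_countable_univ (by simpa using hrange.preimage hx)
end
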